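/- Suppose s ∈ C_E, and for every vertex v a set A(v) of enforcements valid for v in G' is given. Let MOVE = ⋃{A(w) : χ(w) = t}; let LOOPED = {P with s removed from its domain : P ∈ MOVE, P(s) is defined and even}; let OPT = MOVE ∪ LOOPED; and for a vertex v let B(v) be the ⊑-up-closure of the set A(v) ∪ {Merge(Q, s, R) : Q ∈ A(v), s ∈ dom Q, R ∈ OPT}. Then B(v) is complete for v in G'': for every positional strategy ρ that is safe from v in G'', Φ(G'', ρ, v) ∈ B(v). -/

import Mathlib

open Classical

/-- `p ≺ q` iff `(-1)^p * p < (-1)^q * q` computed in `ℤ`. -/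
def prec (p q : ℕ) : Prop := ((-1 : ℤ) ^ p * p < (-1 : ℤ) ^ q * q)

/-- `p ⪯ q` iff `p ≺ q` or `p = q`. -/
def preceq (p q : ℕ) : Prop := prec p q ∨ p = q

/-- An enforcement is a partial function `C ⇀ ℕ`, modelled as `C → Option ℕ`.
`esub P Q` is the relation `P ⊑ Q`: `dom P ⊆ dom Q` and for every `a ∈ dom P`,
`Q a ⪯ P a`. -/
def esub {C : Type*} (P Q : C → Option ℕ) : Prop :=
  ∀ a p, P a = some p → ∃ q, Q a = some q ∧ preceq q p

/-- The `⪯`-minimum of a set of naturals, when it exists. -/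
noncomputable def pmin (S : Set ℕ) : Option ℕ :=
  if h : ∃ m ∈ S, ∀ x ∈ S, preceq m x then some h.choose else none

/-- The union `P ⊔ Q`: its domain is `dom P ∪ dom Q` and its value at `a`
is the `⪯`-minimum of the defined ones among `P a`, `Q a`. -/
noncomputable def eunion {C : Type*} (P Q : C → Option ℕ) : C → Option ℕ := fun a =>
  match P a, Q a with
  | none, q => q
  | some p, none => some p
  | some p, some q => some (if preceq p q then p else q)

/-- The lift `Q↑r`: same domain as `Q`, value `max (Q a) r`. -/
def elift {C : Type*} (Q : C → Option ℕ) (r : ℕ) : C → Option ℕ :=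
  fun a => (Q a).map fun q => max q r

/-- `Merge(P, c, Q)`, where `CE` is the set of colors of player E (the colors of
player O form its complement). -/
noncomputable def emerge {C : Type*} (CE : Set C) (P : C → Option ℕ) (c : C)
    (Q : C → Option ℕ) : C → Option ℕ :=
  match P c with
  | none => P
  | some r =>
      if c ∈ CE then eunion (fun a => if a = c then none else P a) (elift Q r)
      else eunion P (elift Q r)

/-- An arena: a directed graph with vertices partitioned between the players;
`owner u = true` means `u` belongs to player E. -/
structure Arena (V : Type*) where
  owner : V → Bool
  edge : V → V → Prop

/-- A strategy for player E in a stop parity game on arena `A`: to every finite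
history (the list of previously visited vertices) and current vertex `u ∈ V_E` it
assigns either a vertex `w` with `edge u w` (`some w`) or the move STOP (`none`). -/
structure EStrategy {V : Type*} (A : Arena V) where
  move : List V → V → Option V
  legal : ∀ h u w, move h u = some w → A.edge u w

/-- A play from `v` in the stop parity game on arena `A`: a maximal sequence of
vertices starting at `v` and following edges; a finite play either is ended
by the STOP move of player E at one of his vertices (`stopped = true`) or ends at
a vertex with no outgoing edges (`stopped = false`). -/
structure Play {V : Type*} (A : Arena V) (v : V) where
  seq : ℕ → Option V
  stopped : Bool
  start : seq 0 = some v
  none_succ : ∀ n, seq n = none → seq (n + 1) = none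
  step : ∀ n u w, seq n = some u → seq (n + 1) = some w → A.edge u w
  maximal : ∀ n u, seq n = some u → seq (n + 1) = none →
    (stopped = true ∧ A.owner u = true) ∨ (stopped = false ∧ ∀ w, ¬ A.edge u w)

/-- The history of a play before position `n` (the list of its first `n` vertices). -/
def Play.hist {V : Type*} {A : Arena V} {v : V} (p : Play A v) (n : ℕ) : List V :=
  (List.range n).filterMap p.seq

/-- A play is consistent with a strategy `ρ` of player E if every move made from a
vertex of player E is the one prescribed by `ρ` (where `ρ` prescribing `none` means
that the play is ended by STOP). -/
def ConsistentWith {V : Type*} {A : Arena V} {v : V} (ρ : EStrategy A) (p : Play A v) :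
    Prop :=
  ∀ n u, p.seq n = some u → A.owner u = true →
    p.seq (n + 1) = ρ.move (p.hist n) u ∧ (p.seq (n + 1) = none → p.stopped = true)

/-- A play is finite if its sequence is eventually `none`. -/
def Play.IsFinite {V : Type*} {A : Arena V} {v : V} (p : Play A v) : Prop :=
  ∃ n, p.seq n = none

/-- A play ended by the STOP move. -/
def Play.EndedByStop {V : Type*} {A : Arena V} {v : V} (p : Play A v) : Prop :=
  p.IsFinite ∧ p.stopped = true

/-- The maximum rank occurring infinitely often on a play. -/
noncomputable def infRank {V : Type*} {A : Arena V} {v : V} (rank : V → ℕ)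
    (p : Play A v) : ℕ :=
  sSup {r | ∀ N, ∃ n, N ≤ n ∧ ∃ u, p.seq n = some u ∧ rank u = r}

/-- Player O wins a play: it is finite, not ended by STOP, and ends at a vertex of
player E, or it is infinite and the maximum rank occurring infinitely often is odd. -/
def OWinsPlay {V : Type*} {A : Arena V} {v : V} (rank : V → ℕ) (p : Play A v) : Prop :=
  (∃ n u, p.seq n = some u ∧ p.seq (n + 1) = none ∧ p.stopped = false ∧
    A.owner u = true) ∨
  ((∀ n, p.seq n ≠ none) ∧ Odd (infRank rank p))

/-- Player E wins a play: it is finite, not ended by STOP, and ends at a vertex of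
player O, or it is infinite and the maximum rank occurring infinitely often is even. -/
def EWinsPlay {V : Type*} {A : Arena V} {v : V} (rank : V → ℕ) (p : Play A v) : Prop :=
  (∃ n u, p.seq n = some u ∧ p.seq (n + 1) = none ∧ p.stopped = false ∧
    A.owner u = false) ∨
  ((∀ n, p.seq n ≠ none) ∧ Even (infRank rank p))

/-- A strategy is safe from `v` if no play from `v` consistent with it is won by O. -/
def SafeFrom {V : Type*} (A : Arena V) (rank : V → ℕ) (ρ : EStrategy A) (v : V) : Prop :=
  ∀ p : Play A v, ConsistentWith ρ p → ¬ OWinsPlay rank p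

/-- A strategy is winning from `v` if every play from `v` consistent with it is won
by E. -/
def WinningFrom {V : Type*} (A : Arena V) (rank : V → ℕ) (ρ : EStrategy A) (v : V) :
    Prop :=
  ∀ p : Play A v, ConsistentWith ρ p → EWinsPlay rank p

/-- A strategy of the ordinary parity game: it never plays STOP when an outgoing
edge exists. -/
def NonStopping {V : Type*} {A : Arena V} (ρ : EStrategy A) : Prop :=
  ∀ h u, A.owner u = true → (∃ w, A.edge u w) → ρ.move h u ≠ none

/-- A strategy is positional if its move depends only on the current vertex. -/
def Positional {V : Type*} {A : Arena V} (ρ : EStrategy A) : Prop :=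
  ∀ h h' u, ρ.move h u = ρ.move h' u

/-- `ConsPath A ρ v h u`: starting at `v` there is a finite prefix of a play
consistent with `ρ` whose already-visited vertices are `h` and whose current
(last) vertex is `u`; the full prefix is `h ++ [u]`. -/
inductive ConsPath {V : Type*} (A : Arena V) (ρ : EStrategy A) (v : V) :
    List V → V → Prop
  | refl : ConsPath A ρ v [] v
  | stepO (h : List V) (u w : V) :
      ConsPath A ρ v h u → A.owner u = false → A.edge u w → ConsPath A ρ v (h ++ [u]) w
  | stepE (h : List V) (u w : V) :
      ConsPath A ρ v h u → A.owner u = true → ρ.move h u = some w →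
      ConsPath A ρ v (h ++ [u]) w

/-- The maximum rank of a vertex on a finite prefix of a play. -/
def maxRank {V : Type*} (rank : V → ℕ) (l : List V) : ℕ := (l.map rank).foldr max 0

/-- The enforcement `Φ(G, ρ, v)` of a strategy `ρ` from a vertex `v` in the stop
parity game with player-aware coloring `χ`: its value at a color `c` is the
`⪯`-minimum of the maximum ranks of finite prefixes of plays from `v` consistent
with `ρ` that end at a vertex `w` of color `c`, where for `w ∈ V_E` only prefixes
at which `ρ` answers STOP are considered (undefined if there is no such prefix). -/
noncomputable def Phi {V C : Type*} (A : Arena V) (rank : V → ℕ) (χ : V → C)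
    (ρ : EStrategy A) (v : V) : C → Option ℕ :=
  fun c => pmin {r | ∃ (w : V) (h : List V), χ w = c ∧ ConsPath A ρ v h w ∧
    (A.owner w = true → ρ.move h w = none) ∧ r = maxRank rank (h ++ [w])}

/-- A set `S` of enforcements is valid for `v`: sound, complete and up-closed. -/
def ValidFamily {V C : Type*} (A : Arena V) (rank : V → ℕ) (χ : V → C) (v : V)
    (S : Set (C → Option ℕ)) : Prop :=
  (∀ P ∈ S, ∃ ρ : EStrategy A, SafeFrom A rank ρ v ∧ esub (Phi A rank χ ρ v) P) ∧
  (∀ ρ : EStrategy A, Positional ρ → SafeFrom A rank ρ v → Phi A rank χ ρ v ∈ S) ∧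
  (∀ P ∈ S, ∀ Q, esub P Q → Q ∈ S)

/-- The arena obtained by adding a directed edge from every vertex of color `s` to
every vertex of color `t`. -/
def addEdges {V C : Type*} (A : Arena V) (χ : V → C) (s t : C) : Arena V where
  owner := A.owner
  edge := fun u w => A.edge u w ∨ (χ u = s ∧ χ w = t)

/-- The enforcement `P` with the color `c` removed from its domain. -/
noncomputable def removeColor {C : Type*} (P : C → Option ℕ) (c : C) : C → Option ℕ :=
  fun a => if a = c then none else P a


section Aux

lemma prec_iff (p q : ℕ) : prec p q ↔
    ((p % 2 = 1 ∧ q % 2 = 0) ∨ (p % 2 = 1 ∧ q % 2 = 1 ∧ q < p) ∨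
     (p % 2 = 0 ∧ q % 2 = 0 ∧ p < q)) := by
  unfold prec
  rcases Nat.even_or_odd p with hp | hp <;> rcases Nat.even_or_odd q with hq | hq <;>
    rw [hp.neg_one_pow] <;> try rw [hq.neg_one_pow]
  all_goals
    first
    | (have hp' := Nat.even_iff.mp hp) | (have hp' := Nat.odd_iff.mp hp)
  all_goals
    first
    | (have hq' := Nat.even_iff.mp hq) | (have hq' := Nat.odd_iff.mp hq)
  all_goals push_cast; omega

lemma preceq_iff (p q : ℕ) : preceq p q ↔
    ((p % 2 = 1 ∧ q % 2 = 0) ∨ (p % 2 = 1 ∧ q % 2 = 1 ∧ q < p) ∨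
     (p % 2 = 0 ∧ q % 2 = 0 ∧ p < q) ∨ p = q) := by
  unfold preceq; rw [prec_iff]; tauto

lemma preceq_refl (p : ℕ) : preceq p p := Or.inr rfl

lemma preceq_trans {p q r : ℕ} (h1 : preceq p q) (h2 : preceq q r) : preceq p r := by
  rw [preceq_iff] at *; omega

lemma pq_max_mono {a b : ℕ} (c : ℕ) (h : preceq a b) : preceq (max a c) (max b c) := by
  rw [preceq_iff] at *; omega

lemma pq_G {m r : ℕ} (x : ℕ) (h : preceq m r) : preceq (max m x) (max x r) := by
  rw [preceq_iff] at *; omega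

lemma pq_oddext {m r x : ℕ} (h : preceq m r) (hx : x % 2 = 1) : preceq (max m x) r := by
  rw [preceq_iff] at *; omega

lemma phi_inj {p q : ℕ} (h : ((-1 : ℤ)) ^ p * p = (-1) ^ q * q) : p = q := by
  have := congrArg Int.natAbs h
  simp only [Int.natAbs_mul, Int.natAbs_pow, Int.natAbs_neg, Int.natAbs_one,
    one_pow, one_mul, Int.natAbs_natCast] at this
  exact this

lemma exists_pmin_of_bdd {S : Set ℕ} {M q : ℕ} (hbdd : ∀ x ∈ S, x ≤ M) (hq : q ∈ S) :
    ∃ m ∈ S, ∀ x ∈ S, preceq m x := by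
  classical
  let T : Finset ℕ := (Finset.range (M + 1)).filter (· ∈ S)
  have hmemT : ∀ x, x ∈ T ↔ x ∈ S := by
    intro x
    simp only [T, Finset.mem_filter, Finset.mem_range]
    constructor
    · rintro ⟨-, h⟩; exact h
    · intro h; exact ⟨Nat.lt_succ_of_le (hbdd x h), h⟩
  obtain ⟨m, hmT, hmin⟩ := T.exists_min_image (fun p => ((-1 : ℤ)) ^ p * p)
    ⟨q, (hmemT q).mpr hq⟩
  refine ⟨m, (hmemT m).mp hmT, fun x hx => ?_⟩
  rcases lt_or_eq_of_le (hmin x ((hmemT x).mpr hx)) with h | h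
  · exact Or.inl h
  · exact Or.inr (phi_inj h)

lemma pmin_spec {S : Set ℕ} {m : ℕ} (h : pmin S = some m) :
    m ∈ S ∧ ∀ x ∈ S, preceq m x := by
  unfold pmin at h
  split at h
  · rename_i hex
    cases h
    exact hex.choose_spec
  · cases h

lemma pmin_le {S : Set ℕ} {M q : ℕ} (hbdd : ∀ x ∈ S, x ≤ M) (hq : q ∈ S) :
    ∃ m, pmin S = some m ∧ preceq m q := by
  have hex := exists_pmin_of_bdd hbdd hq
  have : pmin S = some hex.choose := dif_pos hex
  exact ⟨hex.choose, this, hex.choose_spec.2 q hq⟩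

lemma foldr_max_shift (l : List ℕ) (a : ℕ) :
    List.foldr max a l = max (List.foldr max 0 l) a := by
  induction l with
  | nil => simp
  | cons b l ih => simp [List.foldr, ih]

lemma maxRank_append {V : Type*} (rank : V → ℕ) (l₁ l₂ : List V) :
    maxRank rank (l₁ ++ l₂) = max (maxRank rank l₁) (maxRank rank l₂) := by
  unfold maxRank
  rw [List.map_append, List.foldr_append, foldr_max_shift]

lemma maxRank_le {V : Type*} (rank : V → ℕ) (l : List V) {M : ℕ}
    (hM : ∀ u, rank u ≤ M) : maxRank rank l ≤ M := by
  induction l with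
  | nil => simp [maxRank]
  | cons a l ih => simp only [maxRank, List.map_cons, List.foldr] at *
                   exact max_le (hM a) ih

lemma mem_le_maxRank {V : Type*} (rank : V → ℕ) {l : List V} {a : V} (h : a ∈ l) :
    rank a ≤ maxRank rank l := by
  induction l with
  | nil => cases h
  | cons b l ih =>
    simp only [maxRank, List.map_cons, List.foldr]
    rcases List.mem_cons.mp h with h | h
    · subst h; omega
    · have := ih h; simp only [maxRank] at this; omega

lemma exists_maxRank_mem {V : Type*} (rank : V → ℕ) {l : List V} (h : l ≠ []) :
    ∃ a ∈ l, rank a = maxRank rank l := by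
  induction l with
  | nil => simp at h
  | cons b l ih =>
    rcases eq_or_ne l [] with rfl | hl
    · exact ⟨b, List.mem_cons_self, by simp [maxRank]⟩
    · obtain ⟨a, ha, hra⟩ := ih hl
      simp only [maxRank, List.map_cons, List.foldr] at *
      rcases le_total (rank b) ((l.map rank).foldr max 0) with h' | h'
      · exact ⟨a, List.mem_cons_of_mem _ ha, by omega⟩
      · exact ⟨b, List.mem_cons_self, by omega⟩

end Aux

section Paths

variable {V : Type*} {Ar : Arena V} {τ : EStrategy Ar}

lemma head?_append_some {α : Type*} {l₁ : List α} {a : α} (h : l₁.head? = some a)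
    (l₂ : List α) : (l₁ ++ l₂).head? = some a := by
  cases l₁ with
  | nil => cases h
  | cons b t => simpa using h

lemma getElem_zero_of_head? {α : Type*} {l : List α} {a : α} (h : l.head? = some a)
    (h0 : 0 < l.length) : l[0] = a := by
  cases l with
  | nil => cases h
  | cons b t => simpa using h

lemma head?_of_append_ne_nil {α : Type*} {l₁ l₂ : List α} {a : α}
    (h : (l₁ ++ l₂).head? = some a) (hne : l₁ ≠ []) : l₁.head? = some a := by
  cases l₁ with
  | nil => exact absurd rfl hne
  | cons b t => simpa using h

lemma conspath_append (hτ : Positional τ) {x y z : V} {h g : List V}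
    (h1 : ConsPath Ar τ x h y) (h2 : ConsPath Ar τ y g z) :
    ConsPath Ar τ x (h ++ g) z := by
  induction h2 with
  | refl => simpa using h1
  | stepO g' u w hp how hedge ih =>
    have := ConsPath.stepO (A := Ar) (ρ := τ) (v := x) (h ++ g') u w ih how hedge
    simpa [List.append_assoc] using this
  | stepE g' u w hp how hmv ih =>
    have := ConsPath.stepE (A := Ar) (ρ := τ) (v := x) (h ++ g') u w ih how
      (by rw [hτ (h ++ g') g' u]; exact hmv)
    simpa [List.append_assoc] using this

lemma conspath_chain' (hτ : Positional τ) {x y : V} {h : List V}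
    (hp : ConsPath Ar τ x h y) :
    List.Chain' (fun a b => Ar.edge a b ∧ (Ar.owner a = true → τ.move [] a = some b))
      (h ++ [y]) ∧ (h ++ [y]).head? = some x := by
  induction hp with
  | refl => exact ⟨List.isChain_singleton x, rfl⟩
  | stepO h' u w hp how hedge ih =>
    obtain ⟨ih1, ih2⟩ := ih
    constructor
    · apply List.isChain_append.mpr
      refine ⟨ih1, List.isChain_singleton w, fun a ha b hb => ?_⟩
      rw [List.getLast?_concat] at ha
      simp only [List.head?_cons, Option.mem_def, Option.some.injEq] at ha hb
      subst ha; subst hb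
      exact ⟨hedge, fun h'' => by rw [how] at h''; cases h''⟩
    · exact head?_append_some ih2 [w]
  | stepE h' u w hp how hmv ih =>
    obtain ⟨ih1, ih2⟩ := ih
    constructor
    · apply List.isChain_append.mpr
      refine ⟨ih1, List.isChain_singleton w, fun a ha b hb => ?_⟩
      rw [List.getLast?_concat] at ha
      simp only [List.head?_cons, Option.mem_def, Option.some.injEq] at ha hb
      subst ha; subst hb
      exact ⟨τ.legal h' u w hmv, fun _ => by rw [hτ [] h' u]; exact hmv⟩
    · exact head?_append_some ih2 [w]

lemma cons_owins {rank : V → ℕ} {x : V} {p : Play Ar x} (hcons : ConsistentWith τ p)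
    (hw : OWinsPlay rank p) : (∀ n, p.seq n ≠ none) ∧ Odd (infRank rank p) := by
  rcases hw with ⟨n, u, h1, h2, h3, h4⟩ | h
  · have := (hcons n u h1 h4).2 h2
    rw [h3] at this; cases this
  · exact h

lemma builder {rank : V → ℕ} (hτ : Positional τ) {x : V}
    (hsafe : SafeFrom Ar rank τ x) (f : ℕ → V) (hf0 : f 0 = x)
    (hadj : ∀ n, Ar.edge (f n) (f (n + 1)) ∧
      (Ar.owner (f n) = true → τ.move [] (f n) = some (f (n + 1)))) :
    ¬ Odd (sSup {r | ∀ N, ∃ n, N ≤ n ∧ rank (f n) = r}) := by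
  intro hodd
  let p : Play Ar x :=
    { seq := fun n => some (f n)
      stopped := false
      start := by show some (f 0) = some x; rw [hf0]
      none_succ := by simp
      step := by
        intro n u w hu hw
        cases hu; cases hw
        exact (hadj n).1
      maximal := by simp }
  have hcons : ConsistentWith τ p := by
    intro n u hu how
    obtain rfl : f n = u := by simpa [p] using hu
    refine ⟨?_, by simp [p]⟩
    show some (f (n + 1)) = τ.move (p.hist n) (f n)
    rw [hτ (p.hist n) [] (f n)]
    exact ((hadj n).2 how).symm
  apply hsafe p hcons
  refine Or.inr ⟨fun n => by simp [p], ?_⟩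
  have : infRank rank p = sSup {r | ∀ N, ∃ n, N ≤ n ∧ rank (f n) = r} := by
    unfold infRank
    congr 1
    ext r
    constructor
    · intro hr N
      obtain ⟨n, hn, u, hu, hru⟩ := hr N
      obtain rfl : f n = u := by simpa [p] using hu
      exact ⟨n, hn, hru⟩
    · intro hr N
      obtain ⟨n, hn, hr'⟩ := hr N
      exact ⟨n, hn, f n, rfl, hr'⟩
  rw [this]
  exact hodd

lemma safe_step {rank : V → ℕ} (hτ : Positional τ) {x w : V}
    (hsafe : SafeFrom Ar rank τ x)
    (h1 : Ar.owner x = false → Ar.edge x w)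
    (h2 : Ar.owner x = true → τ.move [] x = some w) :
    SafeFrom Ar rank τ w := by
  intro p hcons howins
  obtain ⟨hinf, hodd⟩ := cons_owins hcons howins
  have hex : ∀ n, ∃ u, p.seq n = some u := by
    intro n
    cases hn : p.seq n with
    | none => exact absurd hn (hinf n)
    | some u => exact ⟨u, rfl⟩
  choose g hg using hex
  have hg0 : g 0 = w := by
    have := p.start
    rw [hg 0] at this
    exact Option.some.inj this
  let f : ℕ → V := fun n => Nat.rec x (fun k _ => g k) n
  have hf0 : f 0 = x := rfl
  have hfs : ∀ n, f (n + 1) = g n := fun n => rfl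
  have hadj : ∀ n, Ar.edge (f n) (f (n + 1)) ∧
      (Ar.owner (f n) = true → τ.move [] (f n) = some (f (n + 1))) := by
    intro n
    cases n with
    | zero =>
      rw [hf0, hfs, hg0]
      constructor
      · cases hox : Ar.owner x with
        | false => exact h1 hox
        | true => exact τ.legal [] x w (h2 hox)
      · exact h2
    | succ k =>
      rw [hfs, hfs]
      constructor
      · exact p.step k (g k) (g (k + 1)) (hg k) (hg (k + 1))
      · intro how
        have := (hcons k (g k) (hg k) how).1
        rw [hg (k + 1)] at this
        rw [hτ [] (p.hist k) (g k)]
        exact this.symm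
  apply builder hτ hsafe f hf0 hadj
  have hset : {r | ∀ N, ∃ n, N ≤ n ∧ rank (f n) = r} =
      {r | ∀ N, ∃ n, N ≤ n ∧ ∃ u, p.seq n = some u ∧ rank u = r} := by
    ext r
    constructor
    · intro hr N
      obtain ⟨n, hn, hr'⟩ := hr (N + 1)
      obtain ⟨k, rfl⟩ : ∃ k, n = k + 1 := ⟨n - 1, by omega⟩
      exact ⟨k, by omega, g k, hg k, by rwa [hfs] at hr'⟩
    · intro hr N
      obtain ⟨n, hn, u, hu, hru⟩ := hr N
      have : u = g n := by rw [hg n] at hu; exact (Option.some.inj hu).symm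
      exact ⟨n + 1, by omega, by rw [hfs, ← this]; exact hru⟩
  rw [hset]
  unfold infRank at hodd
  exact hodd

lemma safe_of_conspath {rank : V → ℕ} (hτ : Positional τ) {x y : V} {h : List V}
    (hsafe : SafeFrom Ar rank τ x) (hp : ConsPath Ar τ x h y) :
    SafeFrom Ar rank τ y := by
  induction hp with
  | refl => exact hsafe
  | stepO h' u w hp how hedge ih =>
    exact safe_step hτ ih (fun _ => hedge) (fun h'' => by rw [how] at h''; cases h'')
  | stepE h' u w hp how hmv ih =>
    exact safe_step hτ ih (fun h'' => by rw [how] at h''; cases h'')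
      (fun _ => by rw [hτ [] h' u]; exact hmv)

lemma lasso {rank : V → ℕ} (hτ : Positional τ) {x : V} {Cl : List V}
    (hsafe : SafeFrom Ar rank τ x) (hC : ConsPath Ar τ x Cl x) (hne : Cl ≠ [])
    (hodd : Odd (maxRank rank Cl)) : False := by
  obtain ⟨hchain, hhead⟩ := conspath_chain' hτ hC
  set N := Cl.length with hNdef
  have hN : 0 < N := List.length_pos_iff.mpr hne
  set l : List V := Cl ++ [x] with hl
  have hlen : l.length = N + 1 := by simp [hl, hNdef]
  have hlt : ∀ n : ℕ, n % N < l.length := by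
    intro n
    have := Nat.mod_lt n hN
    omega
  have hgetCl : ∀ (i : ℕ) (hi : i < N), l.get ⟨i, by omega⟩ = Cl[i] := by
    intro i hi
    simp only [hl, List.get_eq_getElem]
    exact List.getElem_append_left hi
  have hget0 : ∀ (hh : 0 < l.length), l.get ⟨0, hh⟩ = x := by
    intro hh
    rw [hgetCl 0 hN]
    exact getElem_zero_of_head? (head?_of_append_ne_nil hhead hne) (by omega)
  have hgetN : l.get ⟨N, by omega⟩ = x := by
    simp [hl, hNdef]
  let f : ℕ → V := fun n => l.get ⟨n % N, hlt n⟩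
  have hf0 : f 0 = x := by
    show l.get ⟨0 % N, hlt 0⟩ = x
    have : (⟨0 % N, hlt 0⟩ : Fin l.length) = ⟨0, by omega⟩ := Fin.ext (by simp)
    rw [this]
    exact hget0 _
  have hmodsucc : ∀ n : ℕ, (n + 1) % N = (n % N + 1) % N := by
    intro n
    conv_lhs => rw [← Nat.div_add_mod n N]
    rw [Nat.add_assoc, Nat.mul_add_mod]
  have hadj : ∀ n, Ar.edge (f n) (f (n + 1)) ∧
      (Ar.owner (f n) = true → τ.move [] (f n) = some (f (n + 1))) := by
    intro n
    set i := n % N with hi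
    have hiN : i < N := Nat.mod_lt n hN
    have hrel := List.isChain_iff_getElem.mp hchain i (by omega)
    have hfn : f n = l.get ⟨i, by omega⟩ := by
      show l.get ⟨n % N, hlt n⟩ = _
      congr 1
    rcases Nat.lt_or_ge (i + 1) N with hlt2 | hge2
    · have hmod : (n + 1) % N = i + 1 := by
        rw [hmodsucc n, ← hi, Nat.mod_eq_of_lt hlt2]
      have hfn1 : f (n + 1) = l.get ⟨i + 1, by omega⟩ := by
        show l.get ⟨(n + 1) % N, hlt (n + 1)⟩ = _
        congr 1
        exact Fin.ext hmod
      rw [hfn, hfn1]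
      exact hrel
    · have hiN1 : i + 1 = N := by omega
      have hmod : (n + 1) % N = 0 := by
        rw [hmodsucc n, ← hi, hiN1, Nat.mod_self]
      have hfn1 : f (n + 1) = x := by
        show l.get ⟨(n + 1) % N, hlt (n + 1)⟩ = x
        have : (⟨(n + 1) % N, hlt (n + 1)⟩ : Fin l.length) = ⟨0, by omega⟩ :=
          Fin.ext (by simp [hmod])
        rw [this]
        exact hget0 _
      rw [hfn, hfn1]
      have : l.get ⟨i + 1, by omega⟩ = x := by
        have : (⟨i + 1, by omega⟩ : Fin l.length) = ⟨N, by omega⟩ :=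
          Fin.ext hiN1
        rw [this]
        exact hgetN
      simp only [← this]
      exact hrel
  apply builder hτ hsafe f hf0 hadj
  have hset : {r | ∀ N₀, ∃ n, N₀ ≤ n ∧ rank (f n) = r} = {r | ∃ a ∈ Cl, rank a = r} := by
    ext r
    constructor
    · intro hr
      obtain ⟨n, -, hrn⟩ := hr 0
      refine ⟨Cl[n % N]'(Nat.mod_lt n hN), List.getElem_mem _, ?_⟩
      rw [← hrn]
      show rank (Cl[n % N]'(Nat.mod_lt n hN)) = rank (l.get ⟨n % N, hlt n⟩)
      rw [hgetCl (n % N) (Nat.mod_lt n hN)]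
    · rintro ⟨a, ha, rfl⟩ N₀
      obtain ⟨i, hi, rfl⟩ := List.mem_iff_getElem.mp ha
      refine ⟨i + N₀ * N, ?_, ?_⟩
      · have := Nat.le_mul_of_pos_right N₀ hN
        omega
      · show rank (l.get ⟨(i + N₀ * N) % N, _⟩) = rank Cl[i]
        have hm : (i + N₀ * N) % N = i := by
          rw [Nat.add_mul_mod_self_right]
          exact Nat.mod_eq_of_lt hi
        have : (⟨(i + N₀ * N) % N, hlt _⟩ : Fin l.length) = ⟨i, by omega⟩ :=
          Fin.ext hm
        rw [this, hgetCl i hi]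
  rw [hset]
  have hsup : sSup {r | ∃ a ∈ Cl, rank a = r} = maxRank rank Cl := by
    apply le_antisymm
    · apply csSup_le
      · obtain ⟨a, ha, hra⟩ := exists_maxRank_mem rank hne
        exact ⟨rank a, a, ha, rfl⟩
      · rintro b ⟨a, ha, rfl⟩
        exact mem_le_maxRank rank ha
    · apply le_csSup
      · refine ⟨maxRank rank Cl, ?_⟩
        rintro b ⟨a, ha, rfl⟩
        exact mem_le_maxRank rank ha
      · obtain ⟨a, ha, hra⟩ := exists_maxRank_mem rank hne
        exact ⟨a, ha, hra⟩
  rw [hsup]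
  exact hodd

end Paths

section Transfer

variable {V C : Type*}

/-- The set whose `pmin` is `Phi`. -/
def PhiSet (Ar : Arena V) (rank : V → ℕ) (χ : V → C) (τ : EStrategy Ar) (x : V)
    (c : C) : Set ℕ :=
  {r | ∃ (w : V) (h : List V), χ w = c ∧ ConsPath Ar τ x h w ∧
    (Ar.owner w = true → τ.move h w = none) ∧ r = maxRank rank (h ++ [w])}

lemma Phi_eq (Ar : Arena V) (rank : V → ℕ) (χ : V → C) (τ : EStrategy Ar) (x : V)
    (c : C) : Phi Ar rank χ τ x c = pmin (PhiSet Ar rank χ τ x c) := rfl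

lemma sset_bdd [Fintype V] (Ar : Arena V) (rank : V → ℕ) (χ : V → C)
    (τ : EStrategy Ar) (x : V) (c : C) :
    ∀ r ∈ PhiSet Ar rank χ τ x c, r ≤ Finset.univ.sup rank := by
  rintro r ⟨w, h, -, -, -, rfl⟩
  exact maxRank_le rank _ (fun u => Finset.le_sup (Finset.mem_univ u))

/-- The strategy in the original arena obtained from a strategy of the extended
arena by stopping whenever the latter uses an added edge. -/
noncomputable def rhoA (A : Arena V) (χ : V → C) (s t : C)
    (ρ : EStrategy (addEdges A χ s t)) : EStrategy A where
  move h u := (ρ.move h u).bind (fun w => if A.edge u w then some w else none)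
  legal := by
    intro h u w hw
    have hw' : (ρ.move h u).bind (fun w => if A.edge u w then some w else none)
        = some w := hw
    cases hmv : ρ.move h u with
    | none => rw [hmv] at hw'; cases hw'
    | some x =>
      rw [hmv] at hw'
      have hw'' : (if A.edge u x then some x else none) = some w := hw'
      by_cases he : A.edge u x
      · rw [if_pos he] at hw''
        cases hw''
        exact he
      · rw [if_neg he] at hw''
        cases hw''

variable {A : Arena V} {χ : V → C} {s t : C} {ρ : EStrategy (addEdges A χ s t)}

lemma rhoA_pos (hpos : Positional ρ) : Positional (rhoA A χ s t ρ) := by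
  intro h h' u
  show (ρ.move h u).bind _ = (ρ.move h' u).bind _
  rw [hpos h h' u]

lemma rhoA_some {h : List V} {u w : V} (hmv : (rhoA A χ s t ρ).move h u = some w) :
    ρ.move h u = some w ∧ A.edge u w := by
  have h' : (ρ.move h u).bind (fun w => if A.edge u w then some w else none) = some w := hmv
  cases hm : ρ.move h u with
  | none => rw [hm] at h'; cases h'
  | some x =>
    rw [hm] at h'
    have h'' : (if A.edge u x then some x else none) = some w := h'
    by_cases he : A.edge u x
    · rw [if_pos he] at h''
      cases h''
      exact ⟨rfl, he⟩
    · rw [if_neg he] at h''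
      cases h''

lemma rhoA_none {h : List V} {u : V} (hmv : (rhoA A χ s t ρ).move h u = none) :
    ρ.move h u = none ∨ ∃ w, ρ.move h u = some w ∧ ¬ A.edge u w := by
  have h' : (ρ.move h u).bind (fun w => if A.edge u w then some w else none) = none := hmv
  cases hm : ρ.move h u with
  | none => exact Or.inl rfl
  | some x =>
    rw [hm] at h'
    have h'' : (if A.edge u x then some x else none) = none := h'
    by_cases he : A.edge u x
    · rw [if_pos he] at h''; cases h''
    · exact Or.inr ⟨x, rfl, he⟩

lemma conspath_transfer {x y : V} {h : List V}
    (hp : ConsPath A (rhoA A χ s t ρ) x h y) :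
    ConsPath (addEdges A χ s t) ρ x h y := by
  induction hp with
  | refl => exact ConsPath.refl
  | stepO h' u w hp how hedge ih =>
    exact ConsPath.stepO h' u w ih how (Or.inl hedge)
  | stepE h' u w hp how hmv ih =>
    exact ConsPath.stepE h' u w ih how (rhoA_some hmv).1

/-- If the modified strategy stops at a vertex not colored `s`, the original
strategy stops there too. -/
lemma rhoA_stop_transfer {h : List V} {z : V} (hz : χ z ≠ s)
    (hst : (rhoA A χ s t ρ).move h z = none) : ρ.move h z = none := by
  rcases rhoA_none hst with h' | ⟨w, hmw, hnedge⟩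
  · exact h'
  · rcases ρ.legal h z w hmw with he | ⟨hzs, -⟩
    · exact absurd he hnedge
    · exact absurd hzs hz

lemma safe_transfer {rank : V → ℕ} {x : V}
    (hsafe : SafeFrom (addEdges A χ s t) rank ρ x) :
    SafeFrom A rank (rhoA A χ s t ρ) x := by
  intro p hcons howins
  obtain ⟨hinf, hodd⟩ := cons_owins hcons howins
  let q : Play (addEdges A χ s t) x :=
    { seq := p.seq
      stopped := p.stopped
      start := p.start
      none_succ := p.none_succ
      step := fun n u w h1 h2 => Or.inl (p.step n u w h1 h2)
      maximal := fun n u h1 h2 => absurd h2 (hinf (n + 1)) }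
  have hconsq : ConsistentWith ρ q := by
    intro n u hu how
    obtain ⟨c1, c2⟩ := hcons n u hu how
    refine ⟨?_, fun h2 => c2 h2⟩
    cases hn : p.seq (n + 1) with
    | none => exact absurd hn (hinf (n + 1))
    | some w =>
      rw [hn] at c1
      have hh : ρ.move (p.hist n) u = some w := (rhoA_some c1.symm).1
      exact show some w = ρ.move (p.hist n) u by rw [hh]
  apply hsafe q hconsq
  exact Or.inr ⟨hinf, hodd⟩

end Transfer

section Chains

variable {V C : Type*}

/-- A chain of jumps: `JChain Bar ρ rank χ t v r₁ w m` says that from `v` one can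
reach the `t`-colored vertex `w` by a consistent path interleaved with "jump"
moves of player E, the first prefix having maximum rank `⪯ r₁` and all later
segments having odd maximum rank; `m` accumulates the maximum rank so far. -/
inductive JChain (Bar : Arena V) (ρ : EStrategy Bar) (rank : V → ℕ) (χ : V → C)
    (t : C) (v : V) (r₁ : ℕ) : V → ℕ → Prop
  | base (h : List V) (u w : V) :
      ConsPath Bar ρ v h u → Bar.owner u = true → ρ.move [] u = some w → χ w = t →
      preceq (maxRank rank (h ++ [u])) r₁ →
      JChain Bar ρ rank χ t v r₁ w (maxRank rank (h ++ [u]))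
  | step (w : V) (m : ℕ) (g : List V) (u w' : V) :
      JChain Bar ρ rank χ t v r₁ w m → ConsPath Bar ρ w g u → Bar.owner u = true →
      ρ.move [] u = some w' → χ w' = t → Odd (maxRank rank (g ++ [u])) →
      JChain Bar ρ rank χ t v r₁ w' (max m (maxRank rank (g ++ [u])))

variable {Bar : Arena V} {ρ : EStrategy Bar} {rank : V → ℕ} {χ : V → C} {t : C}
  {v : V} {r₁ : ℕ}

lemma jchain_t {w : V} {m : ℕ} (h : JChain Bar ρ rank χ t v r₁ w m) : χ w = t := by
  induction h with
  | base _ _ _ _ _ _ ht _ => exact ht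
  | step _ _ _ _ _ _ _ _ _ ht _ _ => exact ht

lemma jchain_preceq {w : V} {m : ℕ} (h : JChain Bar ρ rank χ t v r₁ w m) :
    preceq m r₁ := by
  induction h with
  | base _ _ _ _ _ _ _ hpr => exact hpr
  | step _ _ _ _ _ _ _ _ _ _ hodd ih => exact pq_oddext ih (Nat.odd_iff.mp hodd)

lemma jchain_safe (hτ : Positional ρ) {w : V} {m : ℕ}
    (hsafe : SafeFrom Bar rank ρ v) (h : JChain Bar ρ rank χ t v r₁ w m) :
    SafeFrom Bar rank ρ w := by
  induction h with
  | base h' u w hp how hmv ht hpr =>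
    exact safe_step hτ (safe_of_conspath hτ hsafe hp)
      (fun h'' => by rw [how] at h''; cases h'') (fun _ => hmv)
  | step w m g u w' hch hp how hmv ht hodd ih =>
    exact safe_step hτ (safe_of_conspath hτ ih hp)
      (fun h'' => by rw [how] at h''; cases h'') (fun _ => hmv)

/-- Prepending a consistent path followed by a jump to a stop-prefix. -/
lemma jump_prepend (hτ : Positional ρ) {x u w : V} {h : List V} {a : C} {r : ℕ}
    (hp : ConsPath Bar ρ x h u) (how : Bar.owner u = true)
    (hmv : ρ.move [] u = some w) (hr : r ∈ PhiSet Bar rank χ ρ w a) :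
    max (maxRank rank (h ++ [u])) r ∈ PhiSet Bar rank χ ρ x a := by
  obtain ⟨z, g, hz, hpg, hst, rfl⟩ := hr
  have hjump : ConsPath Bar ρ x (h ++ [u]) w :=
    ConsPath.stepE h u w hp how (by rw [hτ h [] u]; exact hmv)
  have htotal : ConsPath Bar ρ x ((h ++ [u]) ++ g) z := conspath_append hτ hjump hpg
  refine ⟨z, (h ++ [u]) ++ g, hz, htotal, ?_, ?_⟩
  · intro hoz
    rw [hτ ((h ++ [u]) ++ g) g z]
    exact hst hoz
  · rw [List.append_assoc (h ++ [u]) g [z], maxRank_append rank (h ++ [u]) (g ++ [z])]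

lemma jchain_cover (hτ : Positional ρ) {w : V} {m : ℕ}
    (h : JChain Bar ρ rank χ t v r₁ w m) {a : C} {r : ℕ}
    (hr : r ∈ PhiSet Bar rank χ ρ w a) : max m r ∈ PhiSet Bar rank χ ρ v a := by
  induction h generalizing r with
  | base h' u w hp how hmv ht hpr => exact jump_prepend hτ hp how hmv hr
  | step w m g u w' hch hp how hmv ht hodd ih =>
    have := ih (jump_prepend hτ hp how hmv hr)
    rwa [← Nat.max_assoc] at this
end Chains

/-- A "genuine stop witness": a consistent path (for the modified strategy) from
`x` to an `s`-colored vertex where the original strategy also stops, of maximum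
rank `⪯ r`. -/
def GenWitP {V C : Type*} (A : Arena V) (rank : V → ℕ) (χ : V → C) (s : C)
    (ρ' : EStrategy A) (mv : List V → V → Option V) (x : V) (r : ℕ) : Prop :=
  ∃ z g, χ z = s ∧ ConsPath A ρ' x g z ∧ mv g z = none ∧
    preceq (maxRank rank (g ++ [z])) r

theorem stmt18 {V C : Type*} [Fintype V] [Fintype C] (A : Arena V) (rank : V → ℕ)
    (CE : Set C) (χ : V → C) (hχ : ∀ u, A.owner u = true ↔ χ u ∈ CE)
    (s t : C) (hs : s ∈ CE)
    (Afam : V → Set (C → Option ℕ))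
    (hvalid : ∀ v, ValidFamily A rank χ v (Afam v))
    (v : V) (ρ : EStrategy (addEdges A χ s t))
    (hpos : Positional ρ) (hsafe : SafeFrom (addEdges A χ s t) rank ρ v) :
    ∃ P₀ : C → Option ℕ, esub P₀ (Phi (addEdges A χ s t) rank χ ρ v) ∧
      (P₀ ∈ Afam v ∨
        ∃ Q ∈ Afam v, Q s ≠ none ∧
          ∃ R : C → Option ℕ,
            ((∃ w, χ w = t ∧ R ∈ Afam w) ∨
              (∃ R₀, (∃ w, χ w = t ∧ R₀ ∈ Afam w) ∧ (∃ r, R₀ s = some r ∧ Even r) ∧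
                R = removeColor R₀ s)) ∧
            P₀ = emerge CE Q s R) := by
  classical
  set ρ' := rhoA A χ s t ρ with hρ'def
  have hpos' : Positional ρ' := rhoA_pos hpos
  have h_owner_s : ∀ z : V, χ z = s → A.owner z = true := by
    intro z hz
    exact (hχ z).mpr (by rw [hz]; exact hs)
  -- stop transfer for colors different from s
  have hstop_transfer : ∀ (x : V) (a : C), a ≠ s →
      ∀ r ∈ PhiSet A rank χ ρ' x a, r ∈ PhiSet (addEdges A χ s t) rank χ ρ x a := by
    rintro x a ha r ⟨z, g, hz, hp, hst, rfl⟩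
    refine ⟨z, g, hz, conspath_transfer hp, ?_, rfl⟩
    intro hoz
    exact rhoA_stop_transfer (by rw [hz]; exact ha) (hst hoz)
  have hgen_mem : ∀ (x : V) (r : ℕ), GenWitP A rank χ s ρ' ρ.move x r →
      ∃ q ∈ PhiSet (addEdges A χ s t) rank χ ρ x s, preceq q r := by
    rintro x r ⟨z, g, hz, hp, hmvz, hpre⟩
    exact ⟨maxRank rank (g ++ [z]),
      ⟨z, g, hz, conspath_transfer hp, fun _ => hmvz, rfl⟩, hpre⟩
  have hPhiLe : ∀ (x : V) (a : C) (q : ℕ), q ∈ PhiSet (addEdges A χ s t) rank χ ρ x a →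
      ∃ mq, Phi (addEdges A χ s t) rank χ ρ x a = some mq ∧ preceq mq q := by
    intro x a q hq
    exact pmin_le (sset_bdd (addEdges A χ s t) rank χ ρ x a) hq
  have hQmem : Phi A rank χ ρ' v ∈ Afam v :=
    (hvalid v).2.1 ρ' hpos' (safe_transfer hsafe)
  have hcovQ : ∀ (a : C) (p : ℕ), a ≠ s → Phi A rank χ ρ' v a = some p →
      ∃ mq, Phi (addEdges A χ s t) rank χ ρ v a = some mq ∧ preceq mq p := by
    intro a p ha hp
    have hmem := (pmin_spec hp).1
    exact hPhiLe v a p (hstop_transfer v a ha p hmem)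
  by_cases hQs : ∀ r₁, Phi A rank χ ρ' v s = some r₁ → GenWitP A rank χ s ρ' ρ.move v r₁
  · -- the minimum s-stop (if any) is genuine: no merge needed
    refine ⟨Phi A rank χ ρ' v, ?_, Or.inl hQmem⟩
    intro a p hp
    by_cases ha : a = s
    · rw [ha] at hp ⊢
      obtain ⟨q, hq, hqp⟩ := hgen_mem v p (hQs p hp)
      obtain ⟨mq, hmq, hle⟩ := hPhiLe v s q hq
      exact ⟨mq, hmq, preceq_trans hle hqp⟩
    · exact hcovQ a p ha hp
  · push_neg at hQs
    obtain ⟨r₁, hr₁, hng⟩ := hQs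
    obtain ⟨hr₁mem, hr₁min⟩ := pmin_spec hr₁
    obtain ⟨u₀, h₀, hu₀s, hp₀, hst₀, hval₀⟩ := hr₁mem
    have how₀ : A.owner u₀ = true := h_owner_s u₀ hu₀s
    have hst₀' : ρ'.move h₀ u₀ = none := hst₀ how₀
    have hsome₀ : ∃ w₀, ρ.move h₀ u₀ = some w₀ ∧ ¬ A.edge u₀ w₀ := by
      rcases rhoA_none hst₀' with hc | ⟨w₀, hmv₀, hnedge₀⟩
      · exact absurd ⟨u₀, h₀, hu₀s, hp₀, hc, hval₀ ▸ preceq_refl r₁⟩ hng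
      · exact ⟨w₀, hmv₀, hnedge₀⟩
    obtain ⟨w₀, hmv₀, hnedge₀⟩ := hsome₀
    · have hw₀t : χ w₀ = t := by
        rcases ρ.legal h₀ u₀ w₀ hmv₀ with he | ⟨-, ht'⟩
        · exact absurd he hnedge₀
        · exact ht'
      have hbase : JChain (addEdges A χ s t) ρ rank χ t v r₁ w₀ r₁ := by
        have := JChain.base (Bar := (addEdges A χ s t)) (ρ := ρ) (rank := rank) (χ := χ) (t := t)
          (v := v) (r₁ := r₁) h₀ u₀ w₀ (conspath_transfer hp₀) how₀
          (by rw [hpos [] h₀ u₀]; exact hmv₀) hw₀t (by rw [← hval₀]; exact preceq_refl r₁)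
        rwa [← hval₀] at this
      -- find a terminal target
      have key : ∃ wst mst, JChain (addEdges A χ s t) ρ rank χ t v r₁ wst mst ∧
          ¬ (∃ r_s, Phi A rank χ ρ' wst s = some r_s ∧ Odd r_s ∧
              ¬ GenWitP A rank χ s ρ' ρ.move wst r_s) := by
        by_contra hallc
        have hall : ∀ w m, JChain (addEdges A χ s t) ρ rank χ t v r₁ w m →
            ∃ r_s, Phi A rank χ ρ' w s = some r_s ∧ Odd r_s ∧
              ¬ GenWitP A rank χ s ρ' ρ.move w r_s := by
          intro w m hc
          by_contra hnb
          exact hallc ⟨w, m, hc, hnb⟩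
        have hext : ∀ x : {w : V // ∃ m, JChain (addEdges A χ s t) ρ rank χ t v r₁ w m},
            ∃ (y : {w : V // ∃ m, JChain (addEdges A χ s t) ρ rank χ t v r₁ w m}) (gl : List V),
              gl ≠ [] ∧ ConsPath (addEdges A χ s t) ρ x.1 gl y.1 ∧ Odd (maxRank rank gl) := by
          rintro ⟨w, hwm⟩
          obtain ⟨m, hc⟩ := hwm
          obtain ⟨r_s, hrs, hodd, hngw⟩ := hall w m hc
          obtain ⟨hmem, -⟩ := pmin_spec hrs
          obtain ⟨u, g, hus, hpg, hstg, hvalg⟩ := hmem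
          have how : A.owner u = true := h_owner_s u hus
          have hst' : ρ'.move g u = none := hstg how
          have hsome : ∃ w2, ρ.move g u = some w2 ∧ ¬ A.edge u w2 := by
            rcases rhoA_none hst' with hc' | ⟨w2, hmv', hnedge⟩
            · exact absurd ⟨u, g, hus, hpg, hc', hvalg ▸ preceq_refl r_s⟩ hngw
            · exact ⟨w2, hmv', hnedge⟩
          obtain ⟨w2, hmvg, hnedge⟩ := hsome
          have hwt : χ w2 = t := by
            rcases ρ.legal g u w2 hmvg with he | ⟨-, ht'⟩
            · exact absurd he hnedge
            · exact ht'
          refine ⟨⟨w2, max m (maxRank rank (g ++ [u])),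
            JChain.step w m g u w2 hc (conspath_transfer hpg) how
              (by rw [hpos [] g u]; exact hmvg) hwt (hvalg ▸ hodd)⟩,
            g ++ [u], by simp, ?_, hvalg ▸ hodd⟩
          exact ConsPath.stepE g u w2 (conspath_transfer hpg) how hmvg
        choose F gl hgl_ne hgl_path hgl_odd using hext
        set x₀ : {w : V // ∃ m, JChain (addEdges A χ s t) ρ rank χ t v r₁ w m} := ⟨w₀, r₁, hbase⟩
          with hx₀
        set f : ℕ → {w : V // ∃ m, JChain (addEdges A χ s t) ρ rank χ t v r₁ w m} :=
          fun n => F^[n] x₀ with hfdef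
        have hfs : ∀ n, f (n + 1) = F (f n) := by
          intro n
          simp only [hfdef]
          exact Function.iterate_succ_apply' F n x₀
        have hmulti : ∀ (k i : ℕ), ∃ Cl : List V, Cl ≠ [] ∧
            ConsPath (addEdges A χ s t) ρ (f i).1 Cl (f (i + k + 1)).1 ∧ Odd (maxRank rank Cl) := by
          intro k
          induction k with
          | zero =>
            intro i
            refine ⟨gl (f i), hgl_ne _, ?_, hgl_odd _⟩
            have := hgl_path (f i)
            rwa [← hfs i] at this
          | succ k ih =>
            intro i
            obtain ⟨Cl, hne, hp, hodd⟩ := ih i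
            refine ⟨Cl ++ gl (f (i + k + 1)), by simp [hne], ?_, ?_⟩
            · have h2 := hgl_path (f (i + k + 1))
              rw [← hfs (i + k + 1)] at h2
              exact conspath_append hpos hp h2
            · rw [maxRank_append]
              have h1 := Nat.odd_iff.mp hodd
              have h2 := Nat.odd_iff.mp (hgl_odd (f (i + k + 1)))
              rw [Nat.odd_iff]
              omega
        have hcontra : ∀ i j, i < j → f i = f j → False := by
          intro i j hlt heq
          obtain ⟨Cl, hne, hp, hodd⟩ := hmulti (j - i - 1) i
          have hj : i + (j - i - 1) + 1 = j := by omega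
          rw [hj, ← heq] at hp
          have hsafe_i : SafeFrom (addEdges A χ s t) rank ρ (f i).1 := by
            obtain ⟨m, hm⟩ := (f i).2
            exact jchain_safe hpos hsafe hm
          exact lasso hpos hsafe_i hp hne hodd
        obtain ⟨i, j, hij, heq⟩ := Finite.exists_ne_map_eq_of_infinite f
        rcases Nat.lt_or_ge i j with h | h
        · exact hcontra i j h heq
        · exact hcontra j i (by omega) heq.symm
      obtain ⟨wst, mst, hch, hnb⟩ := key
      have hts : χ wst = t := jchain_t hch
      have hm_pre : preceq mst r₁ := jchain_preceq hch
      have hsafew : SafeFrom (addEdges A χ s t) rank ρ wst := jchain_safe hpos hsafe hch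
      have hRmem : Phi A rank χ ρ' wst ∈ Afam wst :=
        (hvalid wst).2.1 ρ' hpos' (safe_transfer hsafew)
      have hcovA : ∀ (a : C) (r : ℕ), a ≠ s → Phi A rank χ ρ' wst a = some r →
          ∃ mq, Phi (addEdges A χ s t) rank χ ρ v a = some mq ∧ preceq mq (max r r₁) := by
        intro a r ha hr
        have hmem := (pmin_spec hr).1
        have hmem' := hstop_transfer wst a ha r hmem
        have hmem'' := jchain_cover hpos hch hmem'
        obtain ⟨mq, hmq, hle⟩ := hPhiLe v a _ hmem''
        exact ⟨mq, hmq, preceq_trans hle (pq_G r hm_pre)⟩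
      have hcovS : ∀ r_s : ℕ, GenWitP A rank χ s ρ' ρ.move wst r_s →
          ∃ mq, Phi (addEdges A χ s t) rank χ ρ v s = some mq ∧ preceq mq (max r_s r₁) := by
        rintro r_s ⟨z, g, hz, hpg, hmvz, hpre⟩
        have hmem : maxRank rank (g ++ [z]) ∈ PhiSet (addEdges A χ s t) rank χ ρ wst s :=
          ⟨z, g, hz, conspath_transfer hpg, fun _ => hmvz, rfl⟩
        have hmem' := jchain_cover hpos hch hmem
        obtain ⟨mq, hmq, hle⟩ := hPhiLe v s _ hmem'
        exact ⟨mq, hmq, preceq_trans hle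
          (preceq_trans (pq_G _ hm_pre) (pq_max_mono r₁ hpre))⟩
      have hemerge : ∀ R : C → Option ℕ, emerge CE (Phi A rank χ ρ' v) s R =
          eunion (fun a => if a = s then none else Phi A rank χ ρ' v a) (elift R r₁) := by
        intro R
        unfold emerge
        rw [hr₁]
        simp [hs]
      have heunion : ∀ (P1 P2 : C → Option ℕ) (a : C) (p : ℕ),
          eunion P1 P2 a = some p → P1 a = some p ∨ P2 a = some p := by
        intro P1 P2 a p h
        unfold eunion at h
        cases h1 : P1 a <;> cases h2 : P2 a <;> rw [h1, h2] at h
        · cases h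
        · exact Or.inr h
        · exact Or.inl h
        · rename_i p1 p2
          have h' : some (if preceq p1 p2 then p1 else p2) = some p := h
          by_cases hpq : preceq p1 p2
          · rw [if_pos hpq] at h'
            exact Or.inl h'
          · rw [if_neg hpq] at h'
            exact Or.inr h'
      have helift : ∀ (R : C → Option ℕ) (r' : ℕ) (a : C) (p : ℕ),
          elift R r' a = some p → ∃ rr, R a = some rr ∧ p = max rr r' := by
        intro R r' a p h
        unfold elift at h
        cases hR : R a with
        | none => rw [hR] at h; cases h
        | some rr =>
          rw [hR] at h
          simp only [Option.map_some] at h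
          exact ⟨rr, rfl, (Option.some.inj h).symm⟩
      have hQsne : (Phi A rank χ ρ' v) s ≠ none := by rw [hr₁]; simp
      cases hRs : Phi A rank χ ρ' wst s with
      | none =>
        refine ⟨emerge CE (Phi A rank χ ρ' v) s (Phi A rank χ ρ' wst), ?_,
          Or.inr ⟨Phi A rank χ ρ' v, hQmem, hQsne, Phi A rank χ ρ' wst,
            Or.inl ⟨wst, hts, hRmem⟩, rfl⟩⟩
        intro a p hp
        rw [hemerge] at hp
        rcases heunion _ _ a p hp with h1 | h2
        · by_cases ha : a = s
          · rw [if_pos ha] at h1; cases h1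
          · rw [if_neg ha] at h1
            exact hcovQ a p ha h1
        · obtain ⟨rr, hra, rfl⟩ := helift _ _ a p h2
          by_cases ha : a = s
          · rw [ha, hRs] at hra; cases hra
          · exact hcovA a rr ha hra
      | some r_s =>
        by_cases hgw : GenWitP A rank χ s ρ' ρ.move wst r_s
        · refine ⟨emerge CE (Phi A rank χ ρ' v) s (Phi A rank χ ρ' wst), ?_,
            Or.inr ⟨Phi A rank χ ρ' v, hQmem, hQsne, Phi A rank χ ρ' wst,
              Or.inl ⟨wst, hts, hRmem⟩, rfl⟩⟩
          intro a p hp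
          rw [hemerge] at hp
          rcases heunion _ _ a p hp with h1 | h2
          · by_cases ha : a = s
            · rw [if_pos ha] at h1; cases h1
            · rw [if_neg ha] at h1
              exact hcovQ a p ha h1
          · obtain ⟨rr, hra, rfl⟩ := helift _ _ a p h2
            by_cases ha : a = s
            · rw [ha, hRs] at hra
              have hrr : rr = r_s := (Option.some.inj hra).symm
              rw [ha, hrr]
              exact hcovS r_s hgw
            · exact hcovA a rr ha hra
        · have heven : Even r_s := by
            by_contra hodd'
            exact hnb ⟨r_s, hRs, Nat.not_even_iff_odd.mp hodd', hgw⟩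
          refine ⟨emerge CE (Phi A rank χ ρ' v) s (removeColor (Phi A rank χ ρ' wst) s),
            ?_, Or.inr ⟨Phi A rank χ ρ' v, hQmem, hQsne,
              removeColor (Phi A rank χ ρ' wst) s,
              Or.inr ⟨Phi A rank χ ρ' wst, ⟨wst, hts, hRmem⟩, ⟨r_s, hRs, heven⟩, rfl⟩,
              rfl⟩⟩
          intro a p hp
          rw [hemerge] at hp
          rcases heunion _ _ a p hp with h1 | h2
          · by_cases ha : a = s
            · rw [if_pos ha] at h1; cases h1
            · rw [if_neg ha] at h1
              exact hcovQ a p ha h1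
          · obtain ⟨rr, hra, rfl⟩ := helift _ _ a p h2
            by_cases ha : a = s
            · unfold removeColor at hra
              rw [if_pos ha] at hra; cases hra
            · unfold removeColor at hra
              rw [if_neg ha] at hra
              exact hcovA a rr ha hra
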